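/- Let k ≥ 2 and let S be a finite set of Pauli strings on k qubits, each of which is either of the form α_j α_{j+1} for some α ∈ {X, Y, Z} and some j ∈ {1, ..., k-1}, or of the form X_j (the Pauli matrix X at position j and identity elsewhere) for some j ∈ {1, ..., k}. Then the chromatic number of the commutation graph C(S) is at most 3. Concretely, coloring each two-site string α_j α_{j+1} by the parity of j and giving all single-site strings X_j a third color is a proper 3-coloring of C(S). -/

import Mathlib

open Matrix

noncomputable section

/-- The 2×2 identity matrix. -/
def pI : Matrix (Fin 2) (Fin 2) ℂ := 1

/-- The Pauli X matrix. -/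
def pX : Matrix (Fin 2) (Fin 2) ℂ := !![0, 1; 1, 0]

/-- The Pauli Y matrix. -/
def pY : Matrix (Fin 2) (Fin 2) ℂ := !![0, -Complex.I; Complex.I, 0]

/-- The Pauli Z matrix. -/
def pZ : Matrix (Fin 2) (Fin 2) ℂ := !![1, 0; 0, -1]

/-- A Pauli string on `n` qubits: each tensor factor is one of `I, X, Y, Z`. -/
def IsPauliString {n : ℕ} (s : Fin n → Matrix (Fin 2) (Fin 2) ℂ) : Prop :=
  ∀ i, s i = pI ∨ s i = pX ∨ s i = pY ∨ s i = pZ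

/-- The Kronecker (tensor) product of a family of 2×2 matrices, as a matrix
indexed by tuples of indices. -/
def kron {n : ℕ} (s : Fin n → Matrix (Fin 2) (Fin 2) ℂ) :
    Matrix (Fin n → Fin 2) (Fin n → Fin 2) ℂ :=
  Matrix.of fun x y => ∏ i, s i (x i) (y i)

/-- Two Pauli strings commute if their associated Kronecker-product operators commute. -/
def PauliCommute {n : ℕ} (P Q : Fin n → Matrix (Fin 2) (Fin 2) ℂ) : Prop :=
  kron P * kron Q = kron Q * kron P

/-- The commutation graph of a finite set of Pauli strings: two distinct strings are
adjacent iff their associated operators do not commute. -/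
def commutationGraph {n : ℕ} (S : Finset (Fin n → Matrix (Fin 2) (Fin 2) ℂ)) :
    SimpleGraph {P // P ∈ S} where
  Adj P Q := P ≠ Q ∧ ¬ PauliCommute P.1 Q.1
  symm := by
    constructor
    intro P Q h
    exact ⟨h.1.symm, fun hc => h.2 hc.symm⟩
  loopless := ⟨fun P h => h.1 rfl⟩

/-- The Pauli string `α_j α_{j+1}`: equal to `α` at positions `j` and `j+1`
and the identity elsewhere.  (Positions are 0-indexed: `j ∈ {0, …, k-2}`.) -/
def twoSite (k : ℕ) (α : Matrix (Fin 2) (Fin 2) ℂ) (j : ℕ) :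
    Fin k → Matrix (Fin 2) (Fin 2) ℂ :=
  fun i => if i.val = j ∨ i.val = j + 1 then α else pI


/-- The Pauli string `α_j`: equal to `α` at position `j` and the identity elsewhere. -/
def singleSite (k : ℕ) (α : Matrix (Fin 2) (Fin 2) ℂ) (j : ℕ) :
    Fin k → Matrix (Fin 2) (Fin 2) ℂ :=
  fun i => if i.val = j then α else pI

lemma kron_mul {n : ℕ} (P Q : Fin n → Matrix (Fin 2) (Fin 2) ℂ) :
    kron P * kron Q = kron (fun i => P i * Q i) := by
  ext x y
  simp only [kron, Matrix.mul_apply, Matrix.of_apply, ← Finset.prod_mul_distrib,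
    Fintype.prod_sum]

lemma pauliCommute_of_eps {n : ℕ} (P Q : Fin n → Matrix (Fin 2) (Fin 2) ℂ)
    (ε : Fin n → ℂ) (h : ∀ i, Q i * P i = ε i • (P i * Q i)) (hε : ∏ i, ε i = 1) :
    PauliCommute P Q := by
  unfold PauliCommute
  rw [kron_mul, kron_mul]
  ext x y
  simp only [kron, Matrix.of_apply, h, Matrix.smul_apply, smul_eq_mul,
    Finset.prod_mul_distrib, hε, one_mul]

lemma pauliCommute_of_pointwise {n : ℕ} (P Q : Fin n → Matrix (Fin 2) (Fin 2) ℂ)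
    (h : ∀ i, P i * Q i = Q i * P i) : PauliCommute P Q := by
  unfold PauliCommute
  rw [kron_mul, kron_mul]
  rw [show (fun i => P i * Q i) = (fun i => Q i * P i) from funext h]

lemma pauli_factor (α β : Matrix (Fin 2) (Fin 2) ℂ)
    (hα : α = pX ∨ α = pY ∨ α = pZ) (hβ : β = pX ∨ β = pY ∨ β = pZ) :
    ∃ c : ℂ, β * α = c • (α * β) ∧ c * c = 1 := by
  rcases hα with rfl|rfl|rfl <;> rcases hβ with rfl|rfl|rfl <;>
    first
    | exact ⟨1, (one_smul ℂ _).symm, one_mul 1⟩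
    | refine ⟨-1, ?_, by norm_num⟩
      · ext i j
        fin_cases i <;> fin_cases j <;>
          simp [pX, pY, pZ, Matrix.mul_apply, Fin.sum_univ_two] <;> ring

lemma twoSite_commute {k : ℕ} (α β : Matrix (Fin 2) (Fin 2) ℂ)
    (hα : α = pX ∨ α = pY ∨ α = pZ) (hβ : β = pX ∨ β = pY ∨ β = pZ)
    (j l : ℕ) (hj : j + 1 < k) (hl : l + 1 < k) (hpar : j % 2 = l % 2) :
    PauliCommute (twoSite k α j) (twoSite k β l) := by
  classical
  by_cases hjl : j = l
  · subst hjl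
    obtain ⟨c, hc, hc1⟩ := pauli_factor α β hα hβ
    apply pauliCommute_of_eps _ _ (fun i => if i.val = j ∨ i.val = j + 1 then c else 1)
    · intro i
      simp only [twoSite]
      split
      · exact hc
      · simp [pI]
    · have hfil : (Finset.univ.filter (fun i : Fin k => i.val = j ∨ i.val = j + 1))
          = {⟨j, by omega⟩, ⟨j+1, hj⟩} := by
        ext i
        simp [Fin.ext_iff]
      rw [← Finset.prod_filter, hfil]
      rw [Finset.prod_insert (by simp [Fin.ext_iff]), Finset.prod_singleton]
      exact hc1
  · apply pauliCommute_of_pointwise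
    intro i
    simp only [twoSite]
    have : ¬ ((i.val = j ∨ i.val = j + 1) ∧ (i.val = l ∨ i.val = l + 1)) := by omega
    split <;> split <;> simp_all [pI]

lemma singleSite_commute {k : ℕ} (j l : ℕ) :
    PauliCommute (singleSite k pX j) (singleSite k pX l) := by
  apply pauliCommute_of_pointwise
  intro i
  simp only [singleSite]
  split <;> split <;> simp [pI]

/-- **Handcrafted 3-coloring for 1D strings with a transverse field.**  If every
string in `S` is either a two-site string `α_j α_{j+1}` with `α ∈ {X, Y, Z}` or a
single-site string `X_j`, then coloring the two-site strings by the parity of `j`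
and all single-site strings with a third color is proper: same-parity two-site
strings commute and any two single-site `X` strings commute.  Consequently the
chromatic number of the commutation graph is at most 3. -/
theorem handcrafted_three_coloring {k : ℕ} (hk : 2 ≤ k)
    (S : Finset (Fin k → Matrix (Fin 2) (Fin 2) ℂ))
    (hS : ∀ P ∈ S,
      (∃ α j, (α = pX ∨ α = pY ∨ α = pZ) ∧ j + 1 < k ∧ P = twoSite k α j) ∨
      (∃ j, j < k ∧ P = singleSite k pX j)) :
    (∀ P ∈ S, ∀ Q ∈ S, ∀ (α β : Matrix (Fin 2) (Fin 2) ℂ) (j l : ℕ),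
        (α = pX ∨ α = pY ∨ α = pZ) → (β = pX ∨ β = pY ∨ β = pZ) →
        j + 1 < k → l + 1 < k → P = twoSite k α j → Q = twoSite k β l →
        j % 2 = l % 2 → PauliCommute P Q) ∧
    (∀ P ∈ S, ∀ Q ∈ S, ∀ j l : ℕ, j < k → l < k →
        P = singleSite k pX j → Q = singleSite k pX l → PauliCommute P Q) ∧
      (commutationGraph S).chromaticNumber ≤ 3 := by
  classical
  refine ⟨?_, ?_, ?_⟩
  · rintro P _ Q _ α β j l hα hβ hj hl rfl rfl hpar
    exact twoSite_commute α β hα hβ j l hj hl hpar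
  · rintro P _ Q _ j l _ _ rfl rfl
    exact singleSite_commute j l
  · have h3 : (3 : ℕ∞) = (3 : ℕ) := by norm_num
    rw [h3]
    apply SimpleGraph.Colorable.chromaticNumber_le
    have hts : ∀ P : {P // P ∈ S},
        ¬ (∃ j, j < k ∧ P.1 = singleSite k pX j) →
        ∃ j, j + 1 < k ∧ ∃ α, (α = pX ∨ α = pY ∨ α = pZ) ∧ P.1 = twoSite k α j := by
      intro P hns
      rcases hS P.1 P.2 with ⟨α, j, hα, hj, hPe⟩ | ⟨j, hj, hPe⟩
      · exact ⟨j, hj, α, hα, hPe⟩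
      · exact absurd ⟨j, hj, hPe⟩ hns
    let c : {P // P ∈ S} → Fin 3 := fun P =>
      if h : ∃ j, j < k ∧ P.1 = singleSite k pX j then 2
      else ⟨(Classical.choose (hts P h)) % 2, by omega⟩
    refine ⟨⟨c, ?_⟩⟩
    intro P Q hadj hc
    apply hadj.2
    by_cases hP : ∃ j, j < k ∧ P.1 = singleSite k pX j <;>
      by_cases hQ : ∃ j, j < k ∧ Q.1 = singleSite k pX j
    · obtain ⟨j, _, hPe⟩ := hP
      obtain ⟨l, _, hQe⟩ := hQ
      rw [hPe, hQe]; exact singleSite_commute j l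
    · exfalso
      simp only [c, dif_pos hP, dif_neg hQ] at hc
      have := (Fin.ext_iff.mp hc.symm)
      simp at this
      omega
    · exfalso
      simp only [c, dif_pos hQ, dif_neg hP] at hc
      have := (Fin.ext_iff.mp hc)
      simp at this
      omega
    · simp only [c, dif_neg hP, dif_neg hQ, Fin.mk.injEq] at hc
      obtain ⟨hj, α, hα, hPe⟩ := Classical.choose_spec (hts P hP)
      obtain ⟨hl, β, hβ, hQe⟩ := Classical.choose_spec (hts Q hQ)
      rw [hPe, hQe]
      exact twoSite_commute α β hα hβ _ _ hj hl hc
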